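/- Let N ≥ 2 and c > 0. The function x ↦ c|x|^{1-N} belongs to M^{(N+1)/(N-1)}(B₁(0), |x|dx): there exists C > 0 such that for every Borel set E ⊂ B₁(0), ∫_E c|x|^{1-N} |x| dx ≤ C (∫_E |x| dx)^{2/(N+1)}. -/

import Mathlib

open MeasureTheory Metric Set
open scoped ENNReal

/-- For `N ≥ 2` and `c > 0`, the function `x ↦ c|x|^{1-N}` lies in the Marcinkiewicz
space `M^{(N+1)/(N-1)}(B₁(0), |x|dx)`: for every Borel `E ⊆ B₁(0)`,
`∫_E c|x|^{1-N} |x| dx ≤ C (∫_E |x| dx)^{2/(N+1)}`. -/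
theorem stmt13 (N : ℕ) (hN : 2 ≤ N) (c : ℝ) (hc : 0 < c) :
    ∃ C : ℝ, 0 < C ∧ ∀ E : Set (EuclideanSpace ℝ (Fin N)),
      E ⊆ ball (0:EuclideanSpace ℝ (Fin N)) 1 → MeasurableSet E →
      ∫ x in E, c * ‖x‖ ^ ((1:ℝ) - N) * ‖x‖ ≤
        C * (∫ x in E, ‖x‖) ^ ((2:ℝ)/((N:ℝ)+1)) := by
  classical
  haveI : Nontrivial (EuclideanSpace ℝ (Fin N)) := by
    refine nontrivial_of_ne (EuclideanSpace.single ⟨0, by omega⟩ (1:ℝ)) 0 ?_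
    intro h
    have := congrArg (fun v : EuclideanSpace ℝ (Fin N) => v ⟨0, by omega⟩) h
    simp [EuclideanSpace.single_apply] at this
  have hdim : Module.finrank ℝ (EuclideanSpace ℝ (Fin N)) = N := finrank_euclideanSpace_fin
  set V : ℝ≥0∞ := volume (ball (0:EuclideanSpace ℝ (Fin N)) 1) with hV
  have hVpos : 0 < V := measure_ball_pos volume 0 one_pos
  have hVfin : V < ⊤ := measure_ball_lt_top
  set g : EuclideanSpace ℝ (Fin N) → ℝ := fun x => c * ‖x‖ ^ ((1:ℝ) - N) * ‖x‖ with hgdef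
  have hexp_nonpos : (1:ℝ) - N ≤ 0 := by
    have : (2:ℝ) ≤ N := by exact_mod_cast hN
    linarith
  have hg_nonneg : ∀ x, 0 ≤ g x := by
    intro x
    have h1 : (0:ℝ) ≤ ‖x‖ ^ ((1:ℝ) - N) := Real.rpow_nonneg (norm_nonneg x) _
    have h2 : (0:ℝ) ≤ ‖x‖ := norm_nonneg x
    positivity
  have hg_meas : Measurable g :=
    ((measurable_norm.pow_const ((1:ℝ) - N)).const_mul c).mul measurable_norm
  set D₀ : ℝ := c * 2 ^ (N + 1) with hD₀
  have hD₀pos : 0 < D₀ := by positivity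
  set D : ℝ := 2 * D₀ with hD
  -- key ball estimate
  have hball : ∀ r : ℝ, 0 < r →
      ∫⁻ x in ball (0:EuclideanSpace ℝ (Fin N)) r, ENNReal.ofReal (g x)
        ≤ ENNReal.ofReal (D * r ^ 2) * V := by
    intro r hr
    set ρ : ℕ → ℝ := fun k => r * (1/2 : ℝ) ^ k with hρ
    have hρpos : ∀ k, 0 < ρ k := fun k => by positivity
    have hρ2 : ∀ k, ρ k = 2 * ρ (k + 1) := by
      intro k; simp only [hρ, pow_succ]; ring
    set A : ℕ → Set (EuclideanSpace ℝ (Fin N)) :=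
      fun k => ball 0 (ρ k) \ ball 0 (ρ (k + 1)) with hA
    have hcover : ball (0:EuclideanSpace ℝ (Fin N)) r \ {0} ⊆ ⋃ k, A k := by
      intro x hx
      obtain ⟨hx1, hx2⟩ := hx
      rw [mem_ball_zero_iff] at hx1
      have hxpos : 0 < ‖x‖ := by
        simpa [norm_pos_iff] using hx2
      have hex : ∃ k, ρ (k + 1) ≤ ‖x‖ := by
        obtain ⟨n, hn⟩ := exists_pow_lt_of_lt_one (x := ‖x‖ / r)
          (by positivity) (by norm_num : (1/2:ℝ) < 1)
        refine ⟨n, ?_⟩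
        have h1 : ρ n < ‖x‖ := by
          simp only [hρ]
          calc r * (1/2:ℝ) ^ n < r * (‖x‖ / r) := mul_lt_mul_of_pos_left hn hr
            _ = ‖x‖ := by field_simp
        have h2 : ρ (n + 1) ≤ ρ n := by
          rw [hρ2 n]; nlinarith [hρpos (n+1)]
        linarith
      refine mem_iUnion.2 ⟨Nat.find hex, ?_⟩
      have hfs := Nat.find_spec hex
      have hlt : ‖x‖ < ρ (Nat.find hex) := by
        rcases Nat.eq_zero_or_pos (Nat.find hex) with h0 | hpos
        · rw [h0]; simpa [hρ] using hx1
        · obtain ⟨j, hj⟩ := Nat.exists_eq_succ_of_ne_zero hpos.ne'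
          have := Nat.find_min hex (m := j) (by omega)
          rw [hj]
          push_neg at this
          simpa using this
      simp only [hA, mem_diff, mem_ball_zero_iff, not_lt]
      exact ⟨hlt, hfs⟩
    have hAk : ∀ k, ∫⁻ x in A k, ENNReal.ofReal (g x)
        ≤ ENNReal.ofReal (D₀ * r ^ 2 * (1/4:ℝ) ^ k) * V := by
      intro k
      have hAmeas : MeasurableSet (A k) := measurableSet_ball.diff measurableSet_ball
      have hpt : ∀ x ∈ A k, ENNReal.ofReal (g x)
          ≤ ENNReal.ofReal (c * ρ (k+1) ^ ((1:ℝ) - N) * ρ k) := by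
        intro x hx
        apply ENNReal.ofReal_le_ofReal
        obtain ⟨hx1, hx2⟩ := hx
        rw [mem_ball_zero_iff] at hx1
        rw [mem_ball_zero_iff, not_lt] at hx2
        have h1 : ‖x‖ ^ ((1:ℝ) - N) ≤ ρ (k+1) ^ ((1:ℝ) - N) :=
          Real.rpow_le_rpow_of_nonpos (hρpos (k+1)) hx2 hexp_nonpos
        have h2 : ‖x‖ ≤ ρ k := hx1.le
        have h3 : (0:ℝ) ≤ ‖x‖ ^ ((1:ℝ) - N) := Real.rpow_nonneg (norm_nonneg x) _
        calc g x = c * ‖x‖ ^ ((1:ℝ) - N) * ‖x‖ := rfl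
          _ ≤ c * ρ (k+1) ^ ((1:ℝ) - N) * ρ k :=
              mul_le_mul (mul_le_mul_of_nonneg_left h1 hc.le) h2 (norm_nonneg x)
                (mul_nonneg hc.le (Real.rpow_nonneg (hρpos _).le _))
      have hreal : c * ρ (k+1) ^ ((1:ℝ) - N) * ρ k * ρ k ^ N ≤ D₀ * r ^ 2 * (1/4:ℝ) ^ k := by
        set s : ℝ := ρ (k+1) with hs
        have hspos : 0 < s := hρpos (k+1)
        have hρk : ρ k = 2 * s := hρ2 k
        have hkey : s ^ ((1:ℝ) - N) * s * s ^ N = s ^ 2 := by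
          rw [← Real.rpow_natCast s N, mul_assoc, mul_comm s (s ^ ((N:ℕ):ℝ)),
            ← Real.rpow_add_one hspos.ne', ← Real.rpow_add hspos,
            show (1:ℝ) - (N:ℕ) + ((N:ℕ) + 1) = (2:ℝ) by ring, Real.rpow_two]
        have hexpand : c * s ^ ((1:ℝ) - N) * (2*s) * (2*s) ^ N
            = c * 2 ^ (N+1) * (s ^ ((1:ℝ)-N) * s * s ^ N) := by
          rw [mul_pow]; ring
        rw [hρk, hexpand, hkey]
        have hs2 : s ^ 2 ≤ r ^ 2 * (1/4:ℝ) ^ k := by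
          have : s = r * (1/2:ℝ) ^ (k+1) := rfl
          rw [this]
          have h14 : ((1/2:ℝ) ^ (k+1)) ^ 2 ≤ (1/4:ℝ) ^ k := by
            have : ((1/2:ℝ) ^ (k+1)) ^ 2 = (1/4:ℝ) ^ (k+1) := by
              rw [← pow_mul, show (1/4:ℝ) = (1/2:ℝ)^2 by norm_num, ← pow_mul]
              ring_nf
            rw [this]
            apply pow_le_pow_of_le_one (by norm_num) (by norm_num) (by omega)
          calc (r * (1/2:ℝ) ^ (k+1)) ^ 2 = r^2 * ((1/2:ℝ) ^ (k+1))^2 := by ring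
            _ ≤ r^2 * (1/4:ℝ)^k := by nlinarith [sq_nonneg r]
        calc c * 2 ^ (N+1) * s ^ 2 ≤ c * 2 ^ (N+1) * (r^2 * (1/4:ℝ)^k) := by
              apply mul_le_mul_of_nonneg_left hs2 (by positivity)
          _ = D₀ * r ^ 2 * (1/4:ℝ) ^ k := by rw [hD₀]; ring
      calc ∫⁻ x in A k, ENNReal.ofReal (g x)
          ≤ ∫⁻ _ in A k, ENNReal.ofReal (c * ρ (k+1) ^ ((1:ℝ) - N) * ρ k) :=
            setLIntegral_mono' hAmeas hpt
        _ = ENNReal.ofReal (c * ρ (k+1) ^ ((1:ℝ) - N) * ρ k) * volume (A k) :=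
            setLIntegral_const _ _
        _ ≤ ENNReal.ofReal (c * ρ (k+1) ^ ((1:ℝ) - N) * ρ k)
              * (ENNReal.ofReal (ρ k ^ N) * V) := by
            apply mul_le_mul_right
            calc volume (A k) ≤ volume (ball (0:EuclideanSpace ℝ (Fin N)) (ρ k)) :=
                  measure_mono diff_subset
              _ = ENNReal.ofReal (ρ k ^ N) * V := by
                  rw [Measure.addHaar_ball volume _ (hρpos k).le, hdim]
        _ = ENNReal.ofReal (c * ρ (k+1) ^ ((1:ℝ) - N) * ρ k * ρ k ^ N) * V := by
            have hc1 : (0:ℝ) ≤ c * ρ (k+1) ^ ((1:ℝ) - N) :=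
              mul_nonneg hc.le (Real.rpow_nonneg (hρpos _).le _)
            rw [ENNReal.ofReal_mul (mul_nonneg hc1 (hρpos k).le),
              ENNReal.ofReal_mul hc1]
            ring
        _ ≤ ENNReal.ofReal (D₀ * r ^ 2 * (1/4:ℝ) ^ k) * V := by
            exact mul_le_mul_left (ENNReal.ofReal_le_ofReal hreal) V
    calc ∫⁻ x in ball (0:EuclideanSpace ℝ (Fin N)) r, ENNReal.ofReal (g x)
        = ∫⁻ x in ball (0:EuclideanSpace ℝ (Fin N)) r \ {0}, ENNReal.ofReal (g x) := by
          refine (setLIntegral_congr ?_).symm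
          refine diff_ae_eq_self.2 ?_
          exact measure_mono_null (inter_subset_right) (measure_singleton 0)
      _ ≤ ∫⁻ x in ⋃ k, A k, ENNReal.ofReal (g x) := lintegral_mono_set hcover
      _ ≤ ∑' k, ∫⁻ x in A k, ENNReal.ofReal (g x) := lintegral_iUnion_le _ _
      _ ≤ ∑' k, ENNReal.ofReal (D₀ * r ^ 2 * (1/4:ℝ) ^ k) * V := ENNReal.tsum_le_tsum hAk
      _ = (∑' k, ENNReal.ofReal (D₀ * r ^ 2 * (1/4:ℝ) ^ k)) * V := ENNReal.tsum_mul_right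
      _ ≤ ENNReal.ofReal (D * r ^ 2) * V := by
          apply mul_le_mul_left
          have hsum : Summable (fun k : ℕ => D₀ * r ^ 2 * (1/4:ℝ) ^ k) :=
            (summable_geometric_of_lt_one (by norm_num) (by norm_num)).mul_left _
          rw [← ENNReal.ofReal_tsum_of_nonneg (fun k => by positivity) hsum]
          apply ENNReal.ofReal_le_ofReal
          rw [tsum_mul_left, tsum_geometric_of_lt_one (by norm_num) (by norm_num)]
          rw [hD]
          nlinarith [sq_nonneg r, hD₀pos]
  -- the constant
  refine ⟨D * V.toReal + c, ?_, ?_⟩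
  · have : 0 < V.toReal := ENNReal.toReal_pos hVpos.ne' hVfin.ne
    have : 0 < D := by positivity
    positivity
  intro E hE hEm
  set m : ℝ := ∫ x in E, ‖x‖ with hm
  have hEfin : volume E ≠ ⊤ := by
    refine ne_of_lt (lt_of_le_of_lt (measure_mono hE) hVfin)
  have hnorm_int : IntegrableOn (fun x : EuclideanSpace ℝ (Fin N) => ‖x‖) E volume := by
    apply Measure.integrableOn_of_bounded hEfin
      (measurable_norm.aestronglyMeasurable)
    filter_upwards [ae_restrict_mem hEm] with x hx
    have := hE hx
    rw [mem_ball_zero_iff] at this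
    simpa [Real.norm_eq_abs, abs_of_nonneg (norm_nonneg x)] using this.le
  have hm0 : 0 ≤ m := integral_nonneg fun x => norm_nonneg x
  have hLHS : ∫ x in E, g x = (∫⁻ x in E, ENNReal.ofReal (g x)).toReal :=
    integral_eq_lintegral_of_nonneg_ae (ae_of_all _ hg_nonneg)
      hg_meas.aestronglyMeasurable
  have hexpne : ((2:ℝ)/((N:ℝ)+1)) ≠ 0 := by positivity
  rcases eq_or_lt_of_le hm0 with h0 | hmpos
  · -- m = 0 case
    have hae : (fun x : EuclideanSpace ℝ (Fin N) => ‖x‖) =ᵐ[volume.restrict E] 0 :=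
      (integral_eq_zero_iff_of_nonneg (fun x => norm_nonneg x) hnorm_int).1 h0.symm
    have hzero : ∫ x in E, g x = 0 := by
      rw [integral_congr_ae (g := fun _ => (0:ℝ)) ?_, integral_zero]
      filter_upwards [hae] with x hx
      simp only [Pi.zero_apply] at hx ⊢
      simp [hgdef, hx]
    show ∫ x in E, g x ≤ (D * V.toReal + c) * m ^ ((2:ℝ)/((N:ℝ)+1))
    rw [hzero, ← h0, Real.zero_rpow hexpne, mul_zero]
  · -- m > 0 case
    set r : ℝ := m ^ ((1:ℝ)/((N:ℝ)+1)) with hrdef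
    have hr : 0 < r := Real.rpow_pos_of_pos hmpos _
    have hN1 : ((N:ℝ)+1) ≠ 0 := by positivity
    have htail : ∫⁻ x in E \ ball (0:EuclideanSpace ℝ (Fin N)) r, ENNReal.ofReal (g x)
        ≤ ENNReal.ofReal (c * r ^ ((1:ℝ) - N)) * ENNReal.ofReal m := by
      have hpt : ∀ x ∈ E \ ball (0:EuclideanSpace ℝ (Fin N)) r,
          ENNReal.ofReal (g x)
            ≤ ENNReal.ofReal (c * r ^ ((1:ℝ) - N)) * ENNReal.ofReal ‖x‖ := by
        intro x hx
        rw [← ENNReal.ofReal_mul (mul_nonneg hc.le (Real.rpow_nonneg hr.le _))]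
        apply ENNReal.ofReal_le_ofReal
        have hxr : r ≤ ‖x‖ := by
          have := hx.2
          rw [mem_ball_zero_iff, not_lt] at this
          exact this
        have h1 : ‖x‖ ^ ((1:ℝ) - N) ≤ r ^ ((1:ℝ) - N) :=
          Real.rpow_le_rpow_of_nonpos hr hxr hexp_nonpos
        calc g x = c * ‖x‖ ^ ((1:ℝ) - N) * ‖x‖ := rfl
          _ ≤ c * r ^ ((1:ℝ) - N) * ‖x‖ := by
              apply mul_le_mul_of_nonneg_right _ (norm_nonneg x)
              exact mul_le_mul_of_nonneg_left h1 hc.le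
      calc ∫⁻ x in E \ ball (0:EuclideanSpace ℝ (Fin N)) r, ENNReal.ofReal (g x)
          ≤ ∫⁻ x in E \ ball (0:EuclideanSpace ℝ (Fin N)) r,
              ENNReal.ofReal (c * r ^ ((1:ℝ) - N)) * ENNReal.ofReal ‖x‖ :=
            setLIntegral_mono' (hEm.diff measurableSet_ball) hpt
        _ ≤ ∫⁻ x in E, ENNReal.ofReal (c * r ^ ((1:ℝ) - N)) * ENNReal.ofReal ‖x‖ :=
            lintegral_mono_set diff_subset
        _ = ENNReal.ofReal (c * r ^ ((1:ℝ) - N)) * ∫⁻ x in E, ENNReal.ofReal ‖x‖ :=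
            lintegral_const_mul' _ _ ENNReal.ofReal_ne_top
        _ = ENNReal.ofReal (c * r ^ ((1:ℝ) - N)) * ENNReal.ofReal m := by
            rw [← ofReal_integral_eq_lintegral_ofReal hnorm_int
              (ae_of_all _ fun x => norm_nonneg x)]
    have hsplit : ∫⁻ x in E, ENNReal.ofReal (g x)
        ≤ ENNReal.ofReal (D * r ^ 2) * V
            + ENNReal.ofReal (c * r ^ ((1:ℝ) - N)) * ENNReal.ofReal m := by
      calc ∫⁻ x in E, ENNReal.ofReal (g x)
          ≤ ∫⁻ x in ball (0:EuclideanSpace ℝ (Fin N)) r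
              ∪ (E \ ball (0:EuclideanSpace ℝ (Fin N)) r), ENNReal.ofReal (g x) := by
            apply lintegral_mono_set
            intro x hx
            by_cases hxb : x ∈ ball (0:EuclideanSpace ℝ (Fin N)) r
            · exact Or.inl hxb
            · exact Or.inr ⟨hx, hxb⟩
        _ ≤ (∫⁻ x in ball (0:EuclideanSpace ℝ (Fin N)) r, ENNReal.ofReal (g x))
              + ∫⁻ x in E \ ball (0:EuclideanSpace ℝ (Fin N)) r, ENNReal.ofReal (g x) :=
            lintegral_union_le _ _ _
        _ ≤ _ := add_le_add (hball r hr) htail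
    have hfinsum : ENNReal.ofReal (D * r ^ 2) * V
        + ENNReal.ofReal (c * r ^ ((1:ℝ) - N)) * ENNReal.ofReal m ≠ ⊤ := by
      apply ENNReal.add_ne_top.2
      constructor
      · exact ENNReal.mul_ne_top ENNReal.ofReal_ne_top hVfin.ne
      · exact ENNReal.mul_ne_top ENNReal.ofReal_ne_top ENNReal.ofReal_ne_top
    have hL : ∫ x in E, g x ≤ D * r ^ 2 * V.toReal + c * r ^ ((1:ℝ) - N) * m := by
      rw [hLHS]
      calc (∫⁻ x in E, ENNReal.ofReal (g x)).toReal
          ≤ (ENNReal.ofReal (D * r ^ 2) * V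
              + ENNReal.ofReal (c * r ^ ((1:ℝ) - N)) * ENNReal.ofReal m).toReal :=
            ENNReal.toReal_mono hfinsum hsplit
        _ = D * r ^ 2 * V.toReal + c * r ^ ((1:ℝ) - N) * m := by
            rw [ENNReal.toReal_add (ENNReal.mul_ne_top ENNReal.ofReal_ne_top hVfin.ne)
              (ENNReal.mul_ne_top ENNReal.ofReal_ne_top ENNReal.ofReal_ne_top),
              ENNReal.toReal_mul, ENNReal.toReal_mul,
              ENNReal.toReal_ofReal (by positivity),
              ENNReal.toReal_ofReal (mul_nonneg hc.le (Real.rpow_nonneg hr.le _)),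
              ENNReal.toReal_ofReal hm0]
    have h1 : r ^ 2 = m ^ ((2:ℝ)/((N:ℝ)+1)) := by
      rw [hrdef, ← Real.rpow_two, ← Real.rpow_mul hmpos.le,
        div_mul_eq_mul_div, one_mul]
    have h2 : r ^ ((1:ℝ) - N) * m = m ^ ((2:ℝ)/((N:ℝ)+1)) := by
      rw [hrdef, ← Real.rpow_mul hmpos.le]
      rw [← Real.rpow_add_one hmpos.ne']
      congr 1
      field_simp
      ring
    refine hL.trans (le_of_eq ?_)
    rw [h1, mul_assoc c, h2]
    ring
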